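/- For every λ ∈ ℤ^N and every r ∈ ℤ/pℤ: s_i(f̃*_r(λ)) = f̃*′_r(s_i(λ)), where s_i is extended by s_i(0) = 0; in particular f̃*_r(λ) ≠ 0 if and only if f̃*′_r(s_i(λ)) ≠ 0. -/

import Mathlib

/-!
The conormal positions of `λ` are the strict records of the walk of partial sums of its
`r`-signature (`+ ↦ 1`, `− ↦ −1`), and `f̃*_r` raises the last record. Put
`c = (λ, ε_i − ε_{i+1})`. Away from `i, i + 1` the signatures of `λ` and `s_i λ` agree. If
`c ≢ 0`, the letters at `i, i + 1` are just interchanged, and they are never `+−` or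
`−+`; if `c ≡ 0`, both pairs are `+−`, or both have the form `(x, −x)` with `x ≤ 0`. Either
way the two walks differ at most at one point, and the records stay put or move by the
transposition `(i i+1)`; `s_i` moves `λ + ε_M` by the same rule.
-/

namespace Kujawa

open Finset

variable {n : ℕ}

/-- The sign `(−1)^{p̄ i}` attached to the parity sequence `pb`. -/
def sg (pb : Fin (n + 1) → ZMod 2) (i : Fin (n + 1)) : ℤ :=
  if pb i = 0 then 1 else -1

/-- `ϑ_j = ∑_{i > j} (−1)^{p̄_i + p̄_j}`. -/
def theta (pb : Fin (n + 1) → ZMod 2) (j : Fin (n + 1)) : ℤ :=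
  ∑ i ∈ Finset.Ioi j, sg pb i * sg pb j

/-- The standard basis vector `ε_i` of `X(T) = ℤ^N`. -/
def eps (i : Fin (n + 1)) : Fin (n + 1) → ℤ := fun j => if j = i then 1 else 0

/-- The `j`-th residue `r_j(λ) = (λ + ϑ, ε_j)`. -/
def res (pb : Fin (n + 1) → ZMod 2) (l : Fin (n + 1) → ℤ) (j : Fin (n + 1)) : ℤ :=
  sg pb j * (l j + theta pb j)

/-- `ρ = ϑ + ∑_{i : p̄_i = 0} ε_i`, coordinatewise. -/
def rho (pb : Fin (n + 1) → ZMod 2) (k : Fin (n + 1)) : ℤ :=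
  theta pb k + (if pb k = 0 then 1 else 0)

/-- `l(λ) = ∑ λ_i`. -/
def ell (l : Fin (n + 1) → ℤ) : ℤ := ∑ i, l i

/-- The central character value `Z_r(λ)`. -/
def Zint (pb : Fin (n + 1) → ZMod 2) (r : ℕ) (l : Fin (n + 1) → ℤ) : ℤ :=
  ∑ s ∈ Finset.Icc 1 r, (-1 : ℤ) ^ (s - 1) *
    ∑ K ∈ Finset.powersetCard s (Finset.univ : Finset (Fin (n + 1))),
      ∑ a ∈ Fintype.piFinset (fun _ : Fin (n + 1) => Finset.range (r + 2)),
        if (∑ k ∈ K, a k) = r - s + 1 ∧ (∀ k, k ∉ K → a k = 0) then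
          (∏ k ∈ K, sg pb k) * ∏ k ∈ K, res pb l k ^ a k
        else 0

/-- `A_r(λ) = #{i : r_i(λ+ε_i) ≡ r (mod p)}`. -/
def Acount (pb : Fin (n + 1) → ZMod 2) (p : ℕ) (r : ZMod p) (l : Fin (n + 1) → ℤ) : ℕ :=
  (Finset.univ.filter fun i : Fin (n + 1) => ((res pb (l + eps i) i : ℤ) : ZMod p) = r).card

/-- `B_r(λ) = #{i : r_i(λ) ≡ r (mod p)}`. -/
def Bcount (pb : Fin (n + 1) → ZMod 2) (p : ℕ) (r : ZMod p) (l : Fin (n + 1) → ℤ) : ℕ :=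
  (Finset.univ.filter fun i : Fin (n + 1) => ((res pb l i : ℤ) : ZMod p) = r).card

/-- For `p = 0`: `γ_a` is the basis element `single a 1` of the free module `ℤ →₀ ℤ`. -/
noncomputable def gamma0 (a : ℤ) : ℤ →₀ ℤ := Finsupp.single a 1

/-- `wt` for `p = 0`, with values in the free `ℤ`-module on basis `{γ_a : a ∈ ℤ}`. -/
noncomputable def wt0 (pb : Fin (n + 1) → ZMod 2) (l : Fin (n + 1) → ℤ) : ℤ →₀ ℤ :=
  ∑ i : Fin (n + 1), sg pb i • gamma0 (sg pb i * (l i + rho pb i))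

/-- `Λ_r ∈ P = ℤδ ⊕ ⊕_{r ∈ ℤ/pℤ} ℤΛ_r`. -/
def LamP (p : ℕ) (r : ZMod p) : ℤ × (ZMod p → ℤ) := (0, fun s => if s = r then 1 else 0)

/-- `δ ∈ P`. -/
def delP (p : ℕ) : ℤ × (ZMod p → ℤ) := (1, 0)

/-- `γ_a = Λ_{s mod p} − Λ_{(s−1) mod p} − d·δ`, where `a = p·d + s` with `1 ≤ s ≤ p`. -/
def gammaP (p : ℕ) (a : ℤ) : ℤ × (ZMod p → ℤ) :=
  LamP p (((a - 1) % (p : ℤ) + 1 : ℤ) : ZMod p) - LamP p (((a - 1) % (p : ℤ) : ℤ) : ZMod p) -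
    ((a - 1) / (p : ℤ)) • delP p

/-- `wt` for prime `p`. -/
def wtP (p : ℕ) (pb : Fin (n + 1) → ZMod 2) (l : Fin (n + 1) → ℤ) : ℤ × (ZMod p → ℤ) :=
  ∑ i : Fin (n + 1), sg pb i • gammaP p (sg pb i * (l i + rho pb i))

/-- Entry `i` of the `r`-signature of `λ`: `1` codes `+`, `-1` codes `−`, `0` codes `0`. -/
def sig (pb : Fin (n + 1) → ZMod 2) (p : ℕ) (r : ZMod p) (l : Fin (n + 1) → ℤ)
    (i : Fin (n + 1)) : ℤ :=
  if ((res pb (l + eps i) i : ℤ) : ZMod p) = r then 1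
  else if ((res pb l i : ℤ) : ZMod p) = r then -1
  else 0

/-- Number of `−`'s of the `r`-signature of `λ` in positions `[i..j]`. -/
noncomputable def nM (pb : Fin (n + 1) → ZMod 2) (p : ℕ) (r : ZMod p) (l : Fin (n + 1) → ℤ)
    (i j : Fin (n + 1)) : ℕ :=
  Set.ncard {k : Fin (n + 1) | k ∈ Finset.Icc i j ∧ sig pb p r l k = -1}

/-- Number of `+`'s of the `r`-signature of `λ` in positions `[i..j]`. -/
noncomputable def nP (pb : Fin (n + 1) → ZMod 2) (p : ℕ) (r : ZMod p) (l : Fin (n + 1) → ℤ)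
    (i j : Fin (n + 1)) : ℕ :=
  Set.ncard {k : Fin (n + 1) | k ∈ Finset.Icc i j ∧ sig pb p r l k = 1}

/-- `i` is the position of a `−` in the reduced `r`-signature of `λ` (i.e. `i` is
`r`-normal for `λ`): the `−` at `i` is never cancelled, which happens exactly when every
interval `[i..j]` contains strictly more `−`'s than `+`'s. -/
def RMinus (pb : Fin (n + 1) → ZMod 2) (p : ℕ) (r : ZMod p) (l : Fin (n + 1) → ℤ)
    (i : Fin (n + 1)) : Prop :=
  sig pb p r l i = -1 ∧ ∀ j : Fin (n + 1), i ≤ j → nP pb p r l i j < nM pb p r l i j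

/-- `i` is the position of a `+` in the reduced `r`-signature of `λ` (i.e. `i` is
`r`-conormal for `λ`). -/
def RPlus (pb : Fin (n + 1) → ZMod 2) (p : ℕ) (r : ZMod p) (l : Fin (n + 1) → ℤ)
    (i : Fin (n + 1)) : Prop :=
  sig pb p r l i = 1 ∧ ∀ j : Fin (n + 1), j ≤ i → nM pb p r l j i < nP pb p r l j i

/-- `i` is the position of the leftmost `−` in the reduced `r`-signature (`r`-good). -/
def RGood (pb : Fin (n + 1) → ZMod 2) (p : ℕ) (r : ZMod p) (l : Fin (n + 1) → ℤ)
    (i : Fin (n + 1)) : Prop :=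
  RMinus pb p r l i ∧ ∀ j : Fin (n + 1), j < i → ¬ RMinus pb p r l j

/-- `i` is the position of the rightmost `+` in the reduced `r`-signature (`r`-cogood). -/
def RCogood (pb : Fin (n + 1) → ZMod 2) (p : ℕ) (r : ZMod p) (l : Fin (n + 1) → ℤ)
    (i : Fin (n + 1)) : Prop :=
  RPlus pb p r l i ∧ ∀ j : Fin (n + 1), i < j → ¬ RPlus pb p r l j

open Classical in
/-- The crystal operator `ẽ*_r`, with `none` playing the role of `0`. -/
noncomputable def eStar (pb : Fin (n + 1) → ZMod 2) (p : ℕ) (r : ZMod p)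
    (l : Fin (n + 1) → ℤ) : Option (Fin (n + 1) → ℤ) :=
  if h : (Finset.univ.filter (RMinus pb p r l)).Nonempty then
    some (l - eps ((Finset.univ.filter (RMinus pb p r l)).min' h))
  else none

open Classical in
/-- The crystal operator `f̃*_r`, with `none` playing the role of `0`. -/
noncomputable def fStar (pb : Fin (n + 1) → ZMod 2) (p : ℕ) (r : ZMod p)
    (l : Fin (n + 1) → ℤ) : Option (Fin (n + 1) → ℤ) :=
  if h : (Finset.univ.filter (RPlus pb p r l)).Nonempty then
    some (l + eps ((Finset.univ.filter (RPlus pb p r l)).max' h))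
  else none

/-- `A ↓ B`: there is an injection `θ : A → B` with `θ a ≤ a` for all `a ∈ A`. -/
def Down (A B : Finset (Fin (n + 1))) : Prop :=
  ∃ θ : Fin (n + 1) → Fin (n + 1), Set.InjOn θ ↑A ∧ ∀ a ∈ A, θ a ∈ B ∧ θ a ≤ a

/-- `C_{i,j}(λ) = {h ∈ (i..j) : c_{i,h}(λ) ≡ 0 (mod p)}`. -/
def Cset (pb : Fin (n + 1) → ZMod 2) (p : ℕ) (l : Fin (n + 1) → ℤ) (i j : Fin (n + 1)) :
    Finset (Fin (n + 1)) :=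
  (Finset.Ioo i j).filter fun h => ((res pb l i - res pb l h : ℤ) : ZMod p) = 0

/-- `B_{i,j}(λ) = {h ∈ [i..j) : b_{i,h}(λ) ≡ 0 (mod p)}`. -/
def Bset (pb : Fin (n + 1) → ZMod 2) (p : ℕ) (l : Fin (n + 1) → ℤ) (i j : Fin (n + 1)) :
    Finset (Fin (n + 1)) :=
  (Finset.Ico i j).filter fun h =>
    ((res pb l i - res pb (l + eps (h + 1)) (h + 1) : ℤ) : ZMod p) = 0

/-- The opposite parity sequence `p̄′_k = p̄_{w₀ k} + 1̄`, where `w₀ k = N + 1 − k`. -/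
def pbRev (pb : Fin (n + 1) → ZMod 2) : Fin (n + 1) → ZMod 2 := fun k => pb k.rev + 1

/-- `s̃ : ℤ^N → ℤ^N`, `(s̃ λ)_{w₀ i} = −λ_i`. -/
def stilde (l : Fin (n + 1) → ℤ) : Fin (n + 1) → ℤ := fun k => -l k.rev

/-- `(i, j)` is an `r`-canceling pair for `λ` (for `i < j`). -/
def CPair (pb : Fin (n + 1) → ZMod 2) (p : ℕ) (r : ZMod p) (l : Fin (n + 1) → ℤ)
    (i j : Fin (n + 1)) : Prop :=
  sig pb p r l i = -1 ∧ sig pb p r l j = 1 ∧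
    ∀ k : Fin (n + 1), i < k → k < j → sig pb p r l k = 0

/-- `(i i+1)·λ`: interchange coordinates `i` and `i+1`. -/
def swapL (i : Fin (n + 1)) (l : Fin (n + 1) → ℤ) : Fin (n + 1) → ℤ :=
  fun k => if k = i then l (i + 1) else if k = i + 1 then l i else l k

/-- The parity sequence obtained from `pb` by interchanging entries `i` and `i+1`. -/
def pbSwap (pb : Fin (n + 1) → ZMod 2) (i : Fin (n + 1)) : Fin (n + 1) → ZMod 2 :=
  fun k => if k = i then pb (i + 1) else if k = i + 1 then pb i else pb k

/-- The odd reflection `s_i` on `X(T)`. -/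
def sI (pb : Fin (n + 1) → ZMod 2) (p : ℕ) (i : Fin (n + 1)) (l : Fin (n + 1) → ℤ) :
    Fin (n + 1) → ℤ :=
  if ((sg pb i * l i - sg pb (i + 1) * l (i + 1) : ℤ) : ZMod p) = 0 then swapL i l
  else swapL i l + eps i - eps (i + 1)

/-- Step `k` of the walk `Q`, from `Q k` to `Q (k + 1)`, reaches a strict maximum. -/
def IsRecord (Q : ℕ → ℤ) (k : ℕ) : Prop := ∀ t ≤ k, Q t < Q (k + 1)

section Records

variable {Q Q' : ℕ → ℤ} {m k : ℕ}

lemma isRecord_congr (h : ∀ t ≤ k + 1, Q t = Q' t) : IsRecord Q k ↔ IsRecord Q' k :=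
  forall₂_congr fun t ht => by rw [h t (by omega), h (k + 1) le_rfl]

lemma IsRecord.succ (hk : IsRecord Q k) (h : Q (k + 1) < Q (k + 2)) : IsRecord Q (k + 1) := by
  intro t ht
  rcases Nat.lt_or_eq_of_le ht with ht | rfl
  · exact (hk t (Nat.le_of_lt_succ ht)).trans h
  · exact h

lemma isRecord_iff_forall_ne (hmk : m + 2 ≤ k) (hm : Q (m + 1) ≤ max (Q m) (Q (m + 2))) :
    IsRecord Q k ↔ ∀ t ≤ k, t ≠ m + 1 → Q t < Q (k + 1) := by
  refine ⟨fun h t ht _ => h t ht, fun h t ht => ?_⟩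
  by_cases htm : t = m + 1
  · subst htm
    exact hm.trans_lt (max_lt (h m (by omega) (by omega)) (h (m + 2) hmk (by omega)))
  · exact h t ht htm

lemma isRecord_iff_of_eq_of_ne (hQ : ∀ t, t ≠ m + 1 → Q t = Q' t)
    (hm : Q (m + 1) ≤ max (Q m) (Q (m + 2))) (hm' : Q' (m + 1) ≤ max (Q' m) (Q' (m + 2)))
    (hk : k ≠ m) (hk' : k ≠ m + 1) : IsRecord Q k ↔ IsRecord Q' k := by
  rcases Nat.lt_or_gt_of_ne hk with hlt | hgt
  · exact isRecord_congr fun t ht => hQ t (by omega)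
  · rw [isRecord_iff_forall_ne (by omega) hm, isRecord_iff_forall_ne (by omega) hm']
    refine forall₃_congr fun t _ htm => ?_
    rw [hQ t htm, hQ (k + 1) (by omega)]

/-- Moving a step of the walk from `m + 1` to `m` (a flat step followed by a step `x`
becomes `x` followed by a flat step) moves records by the transposition of `m` and `m + 1`. -/
lemma isRecord_swap_iff (hQ : ∀ t, t ≠ m + 1 → Q t = Q' t) (hm : Q (m + 1) = Q (m + 2))
    (hm' : Q' (m + 1) = Q m) : IsRecord Q (Equiv.swap m (m + 1) k) ↔ IsRecord Q' k := by
  have hQm := hQ m (by omega)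
  have hQm2 := hQ (m + 2) (by omega)
  by_cases hkm : k = m
  · subst hkm
    rw [Equiv.swap_apply_left]
    exact iff_of_false (fun h => (h (k + 1) le_rfl).ne' hm.symm)
      (fun h => (h k le_rfl).ne (by rw [hm', hQm]))
  by_cases hkm' : k = m + 1
  · subst hkm'
    rw [Equiv.swap_apply_right]
    refine ⟨fun h t ht => ?_, fun h t ht => ?_⟩
    · rw [← hQm2, ← hm]
      rcases Nat.lt_or_eq_of_le ht with ht | rfl
      · rw [← hQ t (by omega)]; exact h t (by omega)
      · rw [hm']; exact h m le_rfl
    · rw [hQ t (by omega), hm, hQm2]; exact h t (by omega)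
  · rw [Equiv.swap_apply_of_ne_of_ne hkm hkm']
    exact isRecord_iff_of_eq_of_ne hQ (by rw [hm]; exact le_max_right _ _)
      (by rw [hm', hQm]; exact le_max_left _ _) hkm hkm'

end Records

def prefixSum (w : Fin (n + 1) → ℤ) (m : ℕ) : ℤ :=
  ∑ t ∈ univ.filter (fun t : Fin (n + 1) => (t : ℕ) < m), w t

section PrefixSum

variable (w : Fin (n + 1) → ℤ)

lemma sum_Icc_eq_prefixSum_sub {j k : Fin (n + 1)} (hjk : j ≤ k) :
    ∑ t ∈ Icc j k, w t = prefixSum w (k + 1) - prefixSum w j := by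
  rw [eq_sub_iff_add_eq, prefixSum, prefixSum, ← sum_union]
  · congr 1
    ext t
    simp only [mem_union, mem_Icc, mem_filter, mem_univ, true_and, Fin.le_def]
    omega
  · refine disjoint_left.mpr fun t ht ht' => ?_
    simp only [mem_Icc, mem_filter, mem_univ, true_and, Fin.le_def] at ht ht'
    omega

lemma prefixSum_succ {m : ℕ} (hm : m < n + 1) :
    prefixSum w (m + 1) = prefixSum w m + w ⟨m, hm⟩ := by
  rw [prefixSum, prefixSum, add_comm (∑ _ ∈ _, _), ← sum_insert (by simp)]
  congr 1
  ext t
  simp only [mem_insert, mem_filter, mem_univ, true_and, Fin.ext_iff]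
  omega

end PrefixSum

section AdjacentPositions

variable {w w' : Fin (n + 1) → ℤ} {i I : Fin (n + 1)}

lemma prefixSum_val_succ (w : Fin (n + 1) → ℤ) (k : Fin (n + 1)) :
    prefixSum w (k + 1) = prefixSum w k + w k :=
  prefixSum_succ w k.isLt

lemma prefixSum_add_two (hI : (I : ℕ) = i + 1) :
    prefixSum w (i + 2) = prefixSum w i + w i + w I := by
  rw [← prefixSum_val_succ, show (i : ℕ) + 1 + 1 = I + 1 by omega, prefixSum_val_succ, hI]

lemma prefixSum_eq_of_eqOn (hI : (I : ℕ) = i + 1) (hoff : ∀ k, k ≠ i → k ≠ I → w k = w' k)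
    (hsum : w i + w I = w' i + w' I) {t : ℕ} (ht : t ≠ i + 1) :
    prefixSum w t = prefixSum w' t := by
  rw [← sub_eq_zero, prefixSum, prefixSum, ← sum_sub_distrib]
  by_cases hti : t ≤ i
  · refine sum_eq_zero fun k hk => sub_eq_zero.mpr (hoff k ?_ ?_) <;>
    · simp only [mem_filter, mem_univ, true_and] at hk
      simp only [ne_eq, Fin.ext_iff]
      omega
  · have hiI : i ≠ I := by simp only [ne_eq, Fin.ext_iff]; omega
    rw [sum_eq_add_of_mem i I (by simp; omega) (by simp; omega) hiI
      fun k _ hk => sub_eq_zero.mpr (hoff k hk.1 hk.2)]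
    linear_combination hsum

lemma not_isRecord_prefixSum_of_nonpos (hw : w i ≤ 0) : ¬ IsRecord (prefixSum w) i := by
  intro h
  have := h i le_rfl
  rw [prefixSum_val_succ] at this
  omega

lemma not_isRecord_prefixSum_succ (hI : (I : ℕ) = i + 1) (hw : w i + w I = 0) :
    ¬ IsRecord (prefixSum w) (i + 1) := by
  intro h
  have := h i (by omega)
  rw [prefixSum_add_two hI] at this
  omega

lemma isRecord_prefixSum_iff_of_cancel (hI : (I : ℕ) = i + 1)
    (hoff : ∀ k, k ≠ i → k ≠ I → w k = w' k) (hw : w i ≤ 0) (hw0 : w i + w I = 0)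
    (hw' : w' i ≤ 0) (hw0' : w' i + w' I = 0) (k : ℕ) :
    IsRecord (prefixSum w) k ↔ IsRecord (prefixSum w') k := by
  by_cases hki : k = i
  · subst hki
    exact iff_of_false (not_isRecord_prefixSum_of_nonpos hw) (not_isRecord_prefixSum_of_nonpos hw')
  by_cases hkI : k = i + 1
  · subst hkI
    exact iff_of_false (not_isRecord_prefixSum_succ hI hw0) (not_isRecord_prefixSum_succ hI hw0')
  have hbelow : ∀ v : Fin (n + 1) → ℤ, v i ≤ 0 →
      prefixSum v (i + 1) ≤ max (prefixSum v i) (prefixSum v (i + 2)) :=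
    fun v hv => le_max_of_le_left (by rw [prefixSum_val_succ]; omega)
  exact isRecord_iff_of_eq_of_ne (fun t ht => prefixSum_eq_of_eqOn hI hoff (by omega) ht)
    (hbelow w hw) (hbelow w' hw') hki hkI

lemma isRecord_prefixSum_swap_iff (hI : (I : ℕ) = i + 1)
    (hoff : ∀ k, k ≠ i → k ≠ I → w k = w' k) (hwI : w I = 0) (hw'i : w' i = 0)
    (hw'I : w' I = w i) (k : ℕ) :
    IsRecord (prefixSum w) (Equiv.swap (i : ℕ) (i + 1) k) ↔ IsRecord (prefixSum w') k := by
  refine isRecord_swap_iff (fun t ht => prefixSum_eq_of_eqOn hI hoff (by omega) ht) ?_ ?_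
  · rw [prefixSum_add_two hI, prefixSum_val_succ, hwI, add_zero]
  · rw [prefixSum_val_succ, hw'i, add_zero]
    exact (prefixSum_eq_of_eqOn hI hoff (by omega) (by omega)).symm

lemma IsRecord.prefixSum_succ_of_eq_one (hI : (I : ℕ) = i + 1) (hwI : w I = 1)
    (h : IsRecord (prefixSum w) i) : IsRecord (prefixSum w) (i + 1) :=
  h.succ (by rw [prefixSum_val_succ, prefixSum_add_two hI, hwI]; omega)

end AdjacentPositions

section Signature

variable {pb : Fin (n + 1) → ZMod 2} {p : ℕ} {r : ZMod p} {l : Fin (n + 1) → ℤ}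

lemma sig_eq_one_or_zero_or_neg_one (k : Fin (n + 1)) :
    sig pb p r l k = 1 ∨ sig pb p r l k = 0 ∨ sig pb p r l k = -1 := by
  unfold sig; split_ifs <;> simp

lemma nP_sub_nM (j k : Fin (n + 1)) :
    (nP pb p r l j k : ℤ) - nM pb p r l j k = ∑ t ∈ Icc j k, sig pb p r l t := by
  have hcard : ∀ c : ℤ, Set.ncard {t | t ∈ Icc j k ∧ sig pb p r l t = c}
      = #((Icc j k).filter fun t => sig pb p r l t = c) := fun c => by
    rw [← Set.ncard_coe_finset]; simp
  rw [nP, nM, hcard, hcard, card_filter, card_filter]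
  push_cast
  rw [← sum_sub_distrib]
  refine sum_congr rfl fun t _ => ?_
  rcases sig_eq_one_or_zero_or_neg_one (pb := pb) (r := r) (l := l) t with h | h | h <;> simp [h]

lemma rplus_iff_isRecord (k : Fin (n + 1)) :
    RPlus pb p r l k ↔ IsRecord (prefixSum (sig pb p r l)) k := by
  have hsum : ∀ j : Fin (n + 1), j ≤ k → ((nM pb p r l j k < nP pb p r l j k) ↔
      prefixSum (sig pb p r l) j < prefixSum (sig pb p r l) (k + 1)) := fun j hj => by
    rw [← Nat.cast_lt (α := ℤ), ← sub_pos, nP_sub_nM, sum_Icc_eq_prefixSum_sub _ hj, sub_pos]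
  refine ⟨fun h t ht => ?_, fun h => ⟨?_, fun j hj => (hsum j hj).mpr (h j hj)⟩⟩
  · exact (hsum ⟨t, by omega⟩ ht).mp (h.2 _ ht)
  · have := h k le_rfl
    rw [prefixSum_val_succ] at this
    rcases sig_eq_one_or_zero_or_neg_one (pb := pb) (r := r) (l := l) k with h | h | h <;>
      omega

end Signature

lemma monotoneOn_swap_of_covBy {α : Type*} [LinearOrder α] {a b : α} (hab : a ⋖ b)
    {s : Set α} (hs : a ∉ s ∨ b ∉ s) : MonotoneOn (Equiv.swap a b) s := by
  intro x hx y hy hxy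
  simp only [Equiv.swap_apply_def]
  split_ifs with hxa hya hyb hxb hya' hyb' hya'' hyb''
  · exact le_rfl
  · subst hxa hyb; tauto
  · subst hxa; exact hab.ge_of_gt (hxy.lt_of_ne (Ne.symm hya))
  · exact hab.lt.le
  · exact le_rfl
  · subst hxb; exact hab.lt.le.trans hxy
  · subst hya''; exact hxy.trans hab.lt.le
  · subst hyb''; exact hab.le_of_lt (hxy.lt_of_ne hxb)
  · exact hxy

section FStar

variable {pb pb' : Fin (n + 1) → ZMod 2} {p : ℕ} {r : ZMod p} {l l' : Fin (n + 1) → ℤ}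

lemma fStar_eq_some_of_isGreatest {M : Fin (n + 1)} (h : IsGreatest {k | RPlus pb p r l k} M) :
    fStar pb p r l = some (l + eps M) := by
  classical
  have hne : (univ.filter (RPlus pb p r l)).Nonempty := ⟨M, by simpa using h.1⟩
  rw [fStar, dif_pos hne, ((univ.filter (RPlus pb p r l)).isGreatest_max' hne).unique
    (by simpa using h)]

lemma fStar_eq_none_of_forall_not (h : ∀ k, ¬ RPlus pb p r l k) : fStar pb p r l = none := by
  classical
  rw [fStar, dif_neg]
  rintro ⟨k, hk⟩
  exact h k (mem_filter.mp hk).2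

lemma map_fStar_eq_fStar {g : (Fin (n + 1) → ℤ) → Fin (n + 1) → ℤ}
    (τ : Equiv.Perm (Fin (n + 1))) (hτ : ∀ k, RPlus pb' p r l' (τ k) ↔ RPlus pb p r l k)
    (hmono : MonotoneOn τ {k | RPlus pb p r l k})
    (hstep : ∀ M, IsGreatest {k | RPlus pb p r l k} M → g (l + eps M) = l' + eps (τ M)) :
    Option.map g (fStar pb p r l) = fStar pb' p r l' := by
  classical
  by_cases hne : (univ.filter (RPlus pb p r l)).Nonempty
  · have hM : IsGreatest {k | RPlus pb p r l k} ((univ.filter (RPlus pb p r l)).max' hne) := by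
      simpa using (univ.filter (RPlus pb p r l)).isGreatest_max' hne
    have himage : τ '' {k | RPlus pb p r l k} = {k | RPlus pb' p r l' k} := by
      ext k
      rw [Equiv.image_eq_preimage_symm, Set.mem_preimage, Set.mem_ofPred_eq, Set.mem_ofPred_eq,
        ← hτ, Equiv.apply_symm_apply]
    rw [fStar_eq_some_of_isGreatest hM, Option.map_some, hstep _ hM,
      fStar_eq_some_of_isGreatest (himage ▸ hmono.map_isGreatest hM)]
  · have hnone : ∀ k, ¬ RPlus pb p r l k := fun k hk => hne ⟨k, by simpa using hk⟩
    rw [fStar_eq_none_of_forall_not hnone, fStar_eq_none_of_forall_not fun k hk =>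
      hnone (τ.symm k) ((hτ _).mp (by rwa [Equiv.apply_symm_apply]))]
    rfl

end FStar

section Residues

variable {p : ℕ} {r : ZMod p}

lemma sg_mul_self (q : Fin (n + 1) → ZMod 2) (k : Fin (n + 1)) : sg q k * sg q k = 1 := by
  unfold sg; split_ifs <;> norm_num

lemma sg_cast_ne_zero (hp : p ≠ 1) (q : Fin (n + 1) → ZMod 2) (k : Fin (n + 1)) :
    ((sg q k : ℤ) : ZMod p) ≠ 0 := by
  have := ZMod.nontrivial_iff.mpr hp
  unfold sg; split_ifs <;> simp

lemma sg_succ_eq_neg {pb : Fin (n + 1) → ZMod 2} {i : Fin (n + 1)}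
    (hpar : pb i + pb (i + 1) = 1) : sg pb (i + 1) = -sg pb i := by
  unfold sg
  generalize pb i = x, pb (i + 1) = y at hpar
  revert x y; decide

lemma res_eq_sum (q : Fin (n + 1) → ZMod 2) (l : Fin (n + 1) → ℤ) (k : Fin (n + 1)) :
    res q l k = sg q k * l k + ∑ t ∈ Ioi k, sg q t := by
  rw [res, theta, ← sum_mul]
  linear_combination (∑ t ∈ Ioi k, sg q t) * sg_mul_self q k

lemma res_add_eps_self (q : Fin (n + 1) → ZMod 2) (l : Fin (n + 1) → ℤ) (k : Fin (n + 1)) :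
    res q (l + eps k) k = res q l k + sg q k := by
  simp only [res, eps, Pi.add_apply, if_true]; ring

lemma res_congr_apply (q : Fin (n + 1) → ZMod 2) {l l' : Fin (n + 1) → ℤ} {k : Fin (n + 1)}
    (h : l k = l' k) : res q l k = res q l' k := by
  rw [res, res, h]

lemma sig_eq_ite (q : Fin (n + 1) → ZMod 2) (l : Fin (n + 1) → ℤ) (k : Fin (n + 1)) :
    sig q p r l k = if ((res q l k : ℤ) : ZMod p) + sg q k = r then 1
      else if ((res q l k : ℤ) : ZMod p) = r then -1 else 0 := by
  rw [sig, res_add_eps_self, Int.cast_add]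

lemma sig_congr {q q' : Fin (n + 1) → ZMod 2} {l l' : Fin (n + 1) → ℤ} {k k' : Fin (n + 1)}
    (h : ((res q l k : ℤ) : ZMod p) = res q' l' k') (hs : sg q k = sg q' k') :
    sig q p r l k = sig q' p r l' k' := by
  rw [sig_eq_ite, sig_eq_ite, h, hs]

end Residues

section OddReflection

variable {pb : Fin (n + 1) → ZMod 2} {i : Fin (n + 1)} {p : ℕ} {l : Fin (n + 1) → ℤ}

/-- The pairing `(λ, ε_i − ε_{i+1})` tested in the definition of `s_i`. -/
def oddRootPairing (pb : Fin (n + 1) → ZMod 2) (i : Fin (n + 1)) (l : Fin (n + 1) → ℤ) : ℤ :=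
  sg pb i * l i - sg pb (i + 1) * l (i + 1)

lemma sI_eq_ite : sI pb p i l = if ((oddRootPairing pb i l : ℤ) : ZMod p) = 0 then swapL i l
    else swapL i l + eps i - eps (i + 1) := rfl

lemma swapL_eq_comp (l : Fin (n + 1) → ℤ) : swapL i l = l ∘ Equiv.swap i (i + 1) := by
  funext k
  simp only [swapL, Function.comp_apply, Equiv.swap_apply_def]
  split_ifs <;> rfl

lemma pbSwap_eq_comp (pb : Fin (n + 1) → ZMod 2) : pbSwap pb i = pb ∘ Equiv.swap i (i + 1) := by
  funext k
  simp only [pbSwap, Function.comp_apply, Equiv.swap_apply_def]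
  split_ifs <;> rfl

lemma sg_pbSwap (k : Fin (n + 1)) : sg (pbSwap pb i) k = sg pb (Equiv.swap i (i + 1) k) := by
  rw [pbSwap_eq_comp]; rfl

lemma eps_comp_swap (a b k : Fin (n + 1)) : eps k ∘ Equiv.swap a b = eps (Equiv.swap a b k) := by
  funext t
  simp only [eps, Function.comp_apply, Equiv.swap_apply_eq_iff]

lemma swapL_add_eps (k : Fin (n + 1)) :
    swapL i (l + eps k) = swapL i l + eps (Equiv.swap i (i + 1) k) := by
  rw [swapL_eq_comp, swapL_eq_comp, ← eps_comp_swap]; rfl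

variable (hi : (i : ℕ) < n)
include hi

lemma val_succ : ((i + 1 : Fin (n + 1)) : ℕ) = i + 1 :=
  Fin.val_add_one_of_lt (Fin.lt_def.mpr (by simpa using hi))

lemma covBy_succ : i ⋖ i + 1 := by
  rw [Fin.covBy_iff, val_succ hi, Nat.covBy_iff_add_one_eq]

lemma succ_ne_self : i + 1 ≠ i := by
  simp only [ne_eq, Fin.ext_iff, val_succ hi]; omega

lemma sum_Ioi_eq_add_sum_Ioi_succ (f : Fin (n + 1) → ℤ) :
    ∑ t ∈ Ioi i, f t = f (i + 1) + ∑ t ∈ Ioi (i + 1), f t := by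
  rw [← sum_insert (by simp)]
  congr 1
  ext t
  simp only [mem_Ioi, mem_insert, Fin.lt_def, Fin.ext_iff, val_succ hi]
  omega

lemma sum_Ioi_sg_pbSwap {k : Fin (n + 1)} (hk : k ≠ i) :
    ∑ t ∈ Ioi k, sg (pbSwap pb i) t = ∑ t ∈ Ioi k, sg pb t := by
  simp only [sg_pbSwap]
  have h1 := val_succ hi
  rcases lt_or_gt_of_ne hk with hlt | hgt
  · refine Equiv.Perm.sum_comp _ _ _ fun t ht => ?_
    rw [Set.mem_ofPred_eq, Equiv.swap_apply_ne_self_iff] at ht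
    rcases ht.2 with rfl | rfl <;> simp only [coe_Ioi, Set.mem_Ioi, Fin.lt_def] at hlt ⊢ <;> omega
  · refine sum_congr rfl fun t ht => congrArg _ (Equiv.swap_apply_of_ne_of_ne ?_ ?_) <;>
      simp only [mem_Ioi, Fin.lt_def] at ht hgt <;> simp only [ne_eq, Fin.ext_iff] <;> omega

lemma res_pbSwap_swapL_self :
    res (pbSwap pb i) (swapL i l) i = res pb l (i + 1) + sg pb i := by
  rw [res_eq_sum, res_eq_sum, sum_Ioi_eq_add_sum_Ioi_succ hi, sum_Ioi_sg_pbSwap hi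
    (succ_ne_self hi), sg_pbSwap, sg_pbSwap, Equiv.swap_apply_left, Equiv.swap_apply_right,
    swapL_eq_comp, Function.comp_apply, Equiv.swap_apply_left]
  ring

lemma res_pbSwap_swapL_succ (hpar : pb i + pb (i + 1) = 1) :
    res (pbSwap pb i) (swapL i l) (i + 1) = res pb l i + sg pb i := by
  rw [res_eq_sum, res_eq_sum, sum_Ioi_eq_add_sum_Ioi_succ hi, sum_Ioi_sg_pbSwap hi
    (succ_ne_self hi), sg_pbSwap, Equiv.swap_apply_right, swapL_eq_comp, Function.comp_apply,
    Equiv.swap_apply_right, sg_succ_eq_neg hpar]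
  ring

lemma res_pbSwap_swapL_of_ne {k : Fin (n + 1)} (hk : k ≠ i) (hk' : k ≠ i + 1) :
    res (pbSwap pb i) (swapL i l) k = res pb l k := by
  rw [res_eq_sum, res_eq_sum, sum_Ioi_sg_pbSwap hi hk, sg_pbSwap, swapL_eq_comp,
    Function.comp_apply, Equiv.swap_apply_of_ne_of_ne hk hk']

end OddReflection

section OddReflectionSignature

variable {pb : Fin (n + 1) → ZMod 2} {i : Fin (n + 1)} {p : ℕ} {r : ZMod p}
  {l : Fin (n + 1) → ℤ}

lemma res_eq_add_of_apply_eq (q : Fin (n + 1) → ZMod 2) {l l' : Fin (n + 1) → ℤ}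
    {k : Fin (n + 1)} {d : ℤ} (h : l k = l' k + d) : res q l k = res q l' k + sg q k * d := by
  rw [res, res, h]; ring

lemma sig_eq_one_iff {q : Fin (n + 1) → ZMod 2} {k : Fin (n + 1)} :
    sig q p r l k = 1 ↔ ((res q (l + eps k) k : ℤ) : ZMod p) = r := by
  unfold sig; split_ifs with h <;> simp [h]

lemma res_cast_eq_of_sig_eq_neg_one {q : Fin (n + 1) → ZMod 2} {k : Fin (n + 1)}
    (h : sig q p r l k = -1) : ((res q l k : ℤ) : ZMod p) = r := by
  unfold sig at h; split_ifs at h with h1 h2; exact h2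

lemma sI_add_eps_of_iff {k : Fin (n + 1)}
    (h : ((oddRootPairing pb i (l + eps k) : ℤ) : ZMod p) = 0 ↔
      ((oddRootPairing pb i l : ℤ) : ZMod p) = 0) :
    sI pb p i (l + eps k) = sI pb p i l + eps (Equiv.swap i (i + 1) k) := by
  rw [sI_eq_ite, sI_eq_ite, swapL_add_eps]
  split_ifs <;> first | tauto | abel

lemma sI_add_eps_succ_of_ne_zero (hc : ((oddRootPairing pb i l : ℤ) : ZMod p) ≠ 0)
    (hc' : ((oddRootPairing pb i (l + eps (i + 1)) : ℤ) : ZMod p) = 0) :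
    sI pb p i (l + eps (i + 1)) = sI pb p i l + eps (i + 1) := by
  rw [sI_eq_ite, sI_eq_ite, if_pos hc', if_neg hc, swapL_add_eps, Equiv.swap_apply_right]
  abel

lemma oddRootPairing_add_eps_of_ne {k : Fin (n + 1)} (hk : k ≠ i) (hk' : k ≠ i + 1) :
    oddRootPairing pb i (l + eps k) = oddRootPairing pb i l := by
  simp only [oddRootPairing, eps, Pi.add_apply, if_neg hk.symm, if_neg hk'.symm, add_zero]

lemma sI_add_eps_of_ne {k : Fin (n + 1)} (hk : k ≠ i) (hk' : k ≠ i + 1) :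
    sI pb p i (l + eps k) = sI pb p i l + eps k := by
  rw [sI_add_eps_of_iff (by rw [oddRootPairing_add_eps_of_ne hk hk']),
    Equiv.swap_apply_of_ne_of_ne hk hk']

lemma sI_apply_of_ne {k : Fin (n + 1)} (hk : k ≠ i) (hk' : k ≠ i + 1) :
    sI pb p i l k = swapL i l k := by
  rw [sI_eq_ite]
  split_ifs
  · rfl
  · simp [eps, hk, hk']

variable (hi : (i : ℕ) < n)
include hi

lemma sig_sI_of_ne {k : Fin (n + 1)} (hk : k ≠ i) (hk' : k ≠ i + 1) :
    sig (pbSwap pb i) p r (sI pb p i l) k = sig pb p r l k := by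
  refine sig_congr ?_ (by rw [sg_pbSwap, Equiv.swap_apply_of_ne_of_ne hk hk'])
  rw [res_congr_apply _ (sI_apply_of_ne hk hk'), res_pbSwap_swapL_of_ne hi hk hk']

lemma oddRootPairing_add_eps_self :
    oddRootPairing pb i (l + eps i) = oddRootPairing pb i l + sg pb i := by
  simp only [oddRootPairing, eps, Pi.add_apply, if_true, if_neg (succ_ne_self hi)]; ring

lemma sI_add_eps_self_of_eq_zero (hp : p ≠ 1) (hc : ((oddRootPairing pb i l : ℤ) : ZMod p) = 0) :
    sI pb p i (l + eps i) = sI pb p i l + eps i := by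
  have hc' : ((oddRootPairing pb i (l + eps i) : ℤ) : ZMod p) ≠ 0 := by
    rw [oddRootPairing_add_eps_self hi, Int.cast_add, hc, zero_add]
    exact sg_cast_ne_zero hp pb i
  rw [sI_eq_ite, sI_eq_ite, if_pos hc, if_neg hc', swapL_add_eps, Equiv.swap_apply_left]
  abel

variable (hpar : pb i + pb (i + 1) = 1)
include hpar

lemma oddRootPairing_add_eps_succ :
    oddRootPairing pb i (l + eps (i + 1)) = oddRootPairing pb i l + sg pb i := by
  simp only [oddRootPairing, eps, Pi.add_apply, if_true, if_neg (succ_ne_self hi).symm,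
    sg_succ_eq_neg hpar]
  ring

lemma oddRootPairing_eq_res_sub :
    oddRootPairing pb i l = res pb (l + eps i) i - res pb l (i + 1) := by
  rw [res_add_eps_self, res_eq_sum, res_eq_sum, sum_Ioi_eq_add_sum_Ioi_succ hi,
    sg_succ_eq_neg hpar, oddRootPairing, sg_succ_eq_neg hpar]
  ring

lemma oddRootPairing_eq_res_sub' :
    oddRootPairing pb i l = res pb l i - res pb (l + eps (i + 1)) (i + 1) := by
  rw [oddRootPairing_eq_res_sub hi hpar, res_add_eps_self, res_add_eps_self, sg_succ_eq_neg hpar]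
  ring

lemma oddRootPairing_add_eps_self_eq_res_sub :
    oddRootPairing pb i (l + eps i) = res pb (l + eps i) i - res pb (l + eps (i + 1)) (i + 1) := by
  rw [oddRootPairing_add_eps_self hi, oddRootPairing_eq_res_sub hi hpar, res_add_eps_self pb l
    (i + 1), sg_succ_eq_neg hpar]
  ring

lemma sig_sI_of_ne_zero (hc : ((oddRootPairing pb i l : ℤ) : ZMod p) ≠ 0) :
    sig (pbSwap pb i) p r (sI pb p i l) i = sig pb p r l (i + 1) ∧
      sig (pbSwap pb i) p r (sI pb p i l) (i + 1) = sig pb p r l i := by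
  have hne := succ_ne_self hi
  have hsI : sI pb p i l = swapL i l + eps i - eps (i + 1) := by rw [sI_eq_ite, if_neg hc]
  constructor
  · refine sig_congr ?_ (by rw [sg_pbSwap, Equiv.swap_apply_left])
    rw [res_eq_add_of_apply_eq _ (l' := swapL i l) (d := 1) (by simp [hsI, eps, hne.symm]),
      res_pbSwap_swapL_self hi, sg_pbSwap, Equiv.swap_apply_left, sg_succ_eq_neg hpar]
    push_cast; ring
  · refine sig_congr ?_ (by rw [sg_pbSwap, Equiv.swap_apply_right])
    rw [res_eq_add_of_apply_eq _ (l' := swapL i l) (d := -1) (by simp [hsI, eps, hne]; ring),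
      res_pbSwap_swapL_succ hi hpar, sg_pbSwap, Equiv.swap_apply_right]
    push_cast; ring

lemma sig_sI_of_eq_zero (hp : p ≠ 1) (hc : ((oddRootPairing pb i l : ℤ) : ZMod p) = 0) :
    (sig pb p r l i = 1 ∧ sig pb p r l (i + 1) = -1 ∧
      sig (pbSwap pb i) p r (sI pb p i l) i = 1 ∧
      sig (pbSwap pb i) p r (sI pb p i l) (i + 1) = -1) ∨
    (sig pb p r l i ≤ 0 ∧ sig pb p r l i + sig pb p r l (i + 1) = 0 ∧
      sig (pbSwap pb i) p r (sI pb p i l) i ≤ 0 ∧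
      sig (pbSwap pb i) p r (sI pb p i l) i + sig (pbSwap pb i) p r (sI pb p i l) (i + 1) = 0) := by
  have hsI : sI pb p i l = swapL i l := by rw [sI_eq_ite, if_pos hc]
  set u : ZMod p := ((res pb (l + eps i) i : ℤ) : ZMod p)
  set α : ZMod p := ((sg pb i : ℤ) : ZMod p) with hα_def
  have hα : α ≠ 0 := sg_cast_ne_zero hp pb i
  have e1 : ((res pb l i : ℤ) : ZMod p) = u - α := by
    simp only [u, α, res_add_eps_self]; push_cast; ring
  have e2 : ((res pb l (i + 1) : ℤ) : ZMod p) = u := by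
    rw [oddRootPairing_eq_res_sub hi hpar, Int.cast_sub, sub_eq_zero] at hc
    exact hc.symm
  have e3 : ((res (pbSwap pb i) (swapL i l) i : ℤ) : ZMod p) = u + α := by
    rw [res_pbSwap_swapL_self hi, Int.cast_add, e2]
  have e4 : ((res (pbSwap pb i) (swapL i l) (i + 1) : ℤ) : ZMod p) = u := by
    rw [res_pbSwap_swapL_succ hi hpar, ← res_add_eps_self]
  have s1 := sg_succ_eq_neg hpar
  have s2 : sg (pbSwap pb i) i = -sg pb i := by rw [sg_pbSwap, Equiv.swap_apply_left, s1]
  have s3 : sg (pbSwap pb i) (i + 1) = sg pb i := by rw [sg_pbSwap, Equiv.swap_apply_right]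
  rw [hsI, sig_eq_ite, sig_eq_ite, sig_eq_ite (pbSwap pb i), sig_eq_ite (pbSwap pb i), e1, e2, e3,
    e4, s1, s2, s3, Int.cast_neg, ← hα_def, sub_add_cancel, add_neg_cancel_right,
    ← sub_eq_add_neg]
  by_cases hu : u = r
  · left
    simp [hu, hα]
  · right
    simp only [hu, if_false]
    split_ifs <;> norm_num

end OddReflectionSignature

section Intertwining

variable {pb : Fin (n + 1) → ZMod 2} {i : Fin (n + 1)} {p : ℕ} {r : ZMod p}
  {lam : Fin (n + 1) → ℤ}
variable (hi : (i : ℕ) < n) (hpar : pb i + pb (i + 1) = 1)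
include hi hpar

lemma oddRootPairing_add_eps_eq_zero_iff {k : Fin (n + 1)} (hk : k = i ∨ k = i + 1) :
    ((oddRootPairing pb i (lam + eps k) : ℤ) : ZMod p) = 0 ↔
      ((res pb (lam + eps i) i : ℤ) : ZMod p) = res pb (lam + eps (i + 1)) (i + 1) := by
  rcases hk with rfl | rfl
  · rw [oddRootPairing_add_eps_self_eq_res_sub hi hpar, Int.cast_sub, sub_eq_zero]
  · rw [oddRootPairing_add_eps_succ hi hpar, ← oddRootPairing_add_eps_self hi,
      oddRootPairing_add_eps_self_eq_res_sub hi hpar, Int.cast_sub, sub_eq_zero]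

lemma sig_eq_or_eq_zero_of_ne_zero (hc : ((oddRootPairing pb i lam : ℤ) : ZMod p) ≠ 0) :
    sig pb p r lam i = sig pb p r lam (i + 1) ∨
      (sig pb p r lam i = 0 ∨ sig pb p r lam (i + 1) = 0) := by
  rcases sig_eq_one_or_zero_or_neg_one (pb := pb) (r := r) (l := lam) i with h | h | h <;>
  rcases sig_eq_one_or_zero_or_neg_one (pb := pb) (r := r) (l := lam) (i + 1) with h' | h' | h' <;>
  first | omega | exfalso
  · refine hc ?_
    rw [oddRootPairing_eq_res_sub hi hpar, Int.cast_sub, sig_eq_one_iff.mp h,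
      res_cast_eq_of_sig_eq_neg_one h', sub_self]
  · refine hc ?_
    rw [oddRootPairing_eq_res_sub' hi hpar, Int.cast_sub, sig_eq_one_iff.mp h',
      res_cast_eq_of_sig_eq_neg_one h, sub_self]

lemma map_fStar_sI_of_eq_zero (hp : p ≠ 1)
    (hc : ((oddRootPairing pb i lam : ℤ) : ZMod p) = 0) :
    Option.map (sI pb p i) (fStar pb p r lam) = fStar (pbSwap pb i) p r (sI pb p i lam) := by
  have hI := val_succ hi
  have hoff : ∀ k, k ≠ i → k ≠ i + 1 →
      sig pb p r lam k = sig (pbSwap pb i) p r (sI pb p i lam) k :=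
    fun k hk hk' => (sig_sI_of_ne hi hk hk').symm
  have hstep : ∀ M, M ≠ i + 1 → sI pb p i (lam + eps M) = sI pb p i lam + eps M := by
    intro M hM
    by_cases hMi : M = i
    · rw [hMi, sI_add_eps_self_of_eq_zero hi hp hc]
    · exact sI_add_eps_of_ne hMi hM
  rcases sig_sI_of_eq_zero hi hpar hp hc (r := r) with ⟨h1, h2, h3, h4⟩ | ⟨h1, h2, h3, h4⟩
  · have hsig : sig (pbSwap pb i) p r (sI pb p i lam) = sig pb p r lam := by
      funext k
      by_cases hki : k = i
      · rw [hki, h1, h3]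
      by_cases hkI : k = i + 1
      · rw [hkI, h2, h4]
      exact (hoff k hki hkI).symm
    refine map_fStar_eq_fStar (Equiv.refl _)
      (fun k => by simp only [Equiv.refl_apply, rplus_iff_isRecord, hsig])
      (monotone_id.monotoneOn _) fun M hM => hstep M ?_
    rintro rfl
    have := hM.1.1
    omega
  · have hrec : ∀ k, RPlus pb p r lam k ↔ RPlus (pbSwap pb i) p r (sI pb p i lam) k := fun k => by
      rw [rplus_iff_isRecord, rplus_iff_isRecord]
      exact isRecord_prefixSum_iff_of_cancel hI hoff h1 h2 h3 h4 k
    refine map_fStar_eq_fStar (Equiv.refl _) (fun k => (hrec k).symm)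
      (monotone_id.monotoneOn _) fun M hM => hstep M ?_
    rintro rfl
    have : RPlus pb p r lam (i + 1) := hM.1
    rw [rplus_iff_isRecord, hI] at this
    exact not_isRecord_prefixSum_succ hI h2 this

lemma map_fStar_sI_of_ne_zero_of_sig_eq (hc : ((oddRootPairing pb i lam : ℤ) : ZMod p) ≠ 0)
    (heq : sig pb p r lam i = sig pb p r lam (i + 1)) :
    Option.map (sI pb p i) (fStar pb p r lam) = fStar (pbSwap pb i) p r (sI pb p i lam) := by
  obtain ⟨h1, h2⟩ := sig_sI_of_ne_zero hi hpar hc (r := r)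
  have hsig : sig (pbSwap pb i) p r (sI pb p i lam) = sig pb p r lam := by
    funext k
    by_cases hki : k = i
    · rw [hki, h1, heq]
    by_cases hkI : k = i + 1
    · rw [hkI, h2, heq]
    exact sig_sI_of_ne hi hki hkI
  refine map_fStar_eq_fStar (Equiv.refl _)
    (fun k => by simp only [Equiv.refl_apply, rplus_iff_isRecord, hsig])
    (monotone_id.monotoneOn _) fun M hM => ?_
  rw [Equiv.refl_apply]
  by_cases hMi : M = i
  · -- the letters at `i, i + 1` would be `++`, and a record at `i` forces one at `i + 1`
    subst hMi
    have hsucc : RPlus pb p r lam (M + 1) := by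
      rw [rplus_iff_isRecord, val_succ hi]
      exact ((rplus_iff_isRecord M).mp hM.1).prefixSum_succ_of_eq_one (val_succ hi) (heq ▸ hM.1.1)
    exact absurd (hM.2 hsucc) (covBy_succ hi).lt.not_ge
  by_cases hMI : M = i + 1
  · subst hMI
    refine sI_add_eps_succ_of_ne_zero hc ((oddRootPairing_add_eps_eq_zero_iff hi hpar
      (Or.inr rfl)).mpr ?_)
    rw [sig_eq_one_iff.mp (heq.trans hM.1.1), sig_eq_one_iff.mp hM.1.1]
  · exact sI_add_eps_of_ne hMi hMI

lemma map_fStar_sI_of_ne_zero_of_sig_eq_zero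
    (hc : ((oddRootPairing pb i lam : ℤ) : ZMod p) ≠ 0)
    (h0 : sig pb p r lam i = 0 ∨ sig pb p r lam (i + 1) = 0) :
    Option.map (sI pb p i) (fStar pb p r lam) = fStar (pbSwap pb i) p r (sI pb p i lam) := by
  obtain ⟨h1, h2⟩ := sig_sI_of_ne_zero hi hpar hc (r := r)
  have hoff : ∀ k, k ≠ i → k ≠ i + 1 →
      sig (pbSwap pb i) p r (sI pb p i lam) k = sig pb p r lam k :=
    fun k hk hk' => sig_sI_of_ne hi hk hk'
  have hτ : ∀ k, RPlus (pbSwap pb i) p r (sI pb p i lam) (Equiv.swap i (i + 1) k) ↔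
      RPlus pb p r lam k := by
    intro k
    rw [rplus_iff_isRecord, rplus_iff_isRecord, Fin.val_injective.map_swap, val_succ hi]
    rcases h0 with h0 | h0
    · exact isRecord_prefixSum_swap_iff (val_succ hi) hoff (h2.trans h0) h0 h1.symm k
    · have := isRecord_prefixSum_swap_iff (val_succ hi) (fun k hk hk' => (hoff k hk hk').symm)
        h0 (h1.trans h0) h2 (Equiv.swap (i : ℕ) (i + 1) k)
      rwa [Equiv.swap_apply_self, Iff.comm] at this
  have hnot : i ∉ {k | RPlus pb p r lam k} ∨ i + 1 ∉ {k | RPlus pb p r lam k} :=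
    h0.imp (fun h hR => by have := hR.1; omega) (fun h hR => by have := hR.1; omega)
  refine map_fStar_eq_fStar _ hτ (monotoneOn_swap_of_covBy (covBy_succ hi) hnot)
    fun M hM => sI_add_eps_of_iff ?_
  by_cases hM' : M = i ∨ M = i + 1
  · -- otherwise the plus-residues at `i, i + 1` agree, so a `+` at `M` is a `+` at both
    refine iff_of_false (fun heq => ?_) hc
    rw [oddRootPairing_add_eps_eq_zero_iff hi hpar hM'] at heq
    have hiff : sig pb p r lam i = 1 ↔ sig pb p r lam (i + 1) = 1 := by
      rw [sig_eq_one_iff, sig_eq_one_iff, heq]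
    have hone : sig pb p r lam i = 1 ∨ sig pb p r lam (i + 1) = 1 :=
      hM'.imp (fun h => by rw [← h]; exact hM.1.1) (fun h => by rw [← h]; exact hM.1.1)
    omega
  · obtain ⟨hMi, hMI⟩ := not_or.mp hM'
    rw [oddRootPairing_add_eps_of_ne hMi hMI]

end Intertwining

/-- `s_i(f̃*_r(λ)) = f̃*′_r(s_i(λ))` (with `s_i(0) = 0`); in particular
`f̃*_r(λ) ≠ 0` iff `f̃*′_r(s_i(λ)) ≠ 0`. -/
theorem statement18 (p : ℕ) (hp : p = 0 ∨ p.Prime) (pb : Fin (n + 1) → ZMod 2)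
    (i : Fin (n + 1)) (hi : (i : ℕ) < n) (hpar : pb i + pb (i + 1) = 1)
    (lam : Fin (n + 1) → ℤ) (r : ZMod p) :
    Option.map (sI pb p i) (fStar pb p r lam) = fStar (pbSwap pb i) p r (sI pb p i lam) ∧
      (fStar pb p r lam ≠ none ↔ fStar (pbSwap pb i) p r (sI pb p i lam) ≠ none) := by
  have hp1 : p ≠ 1 := by
    rintro rfl
    exact hp.elim one_ne_zero Nat.not_prime_one
  have hmap : Option.map (sI pb p i) (fStar pb p r lam) =
      fStar (pbSwap pb i) p r (sI pb p i lam) := by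
    by_cases hc : ((oddRootPairing pb i lam : ℤ) : ZMod p) = 0
    · exact map_fStar_sI_of_eq_zero hi hpar hp1 hc
    rcases sig_eq_or_eq_zero_of_ne_zero hi hpar hc (r := r) with h | h
    · exact map_fStar_sI_of_ne_zero_of_sig_eq hi hpar hc h
    · exact map_fStar_sI_of_ne_zero_of_sig_eq_zero hi hpar hc h
  refine ⟨hmap, ?_⟩
  rw [← hmap]
  cases fStar pb p r lam <;> simp

end Kujawa
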